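/- Independence distribution over disjunction (rule 6), two-element case restriction: if |M| > 1, then for first-order θ0, θ1 and teams X, M ⊨_X ∃x0(⋀_{i≤m} u_i ⊥_{w_i} v_i ∧ θ0) ∨ ∃x1(⋀_{m<i≤m+n} u_i ⊥_{w_i} v_i ∧ θ1) if and only if M ⊨_X ∃x0 ∃x1 ∃z0 ∃z1 ∃r [⋀_{i≤m+n} u_i ⊥_{w_i r} v_i ∧ dep(z0) ∧ dep(z1) ∧ ¬z0=z1 ∧ ((θ0 ∧ r=z0) ∨ (θ1 ∧ r=z1))], where x0 is a tuple of variables not occurring in the second disjunct, x1 a tuple not occurring in the first, the u_i, v_i, w_i are tuples of bound variables, and z0, z1, r are fresh variables. -/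

import Mathlib

open FirstOrder Language

/-- Formulas of independence logic over a first-order language `L`, with variables `ℕ`:
first-order formulas, conditional independence atoms `t1 ⊥_{t3} t2` (written
`indep t1 t2 t3`) between tuples (lists) of terms, conjunction, disjunction, and
existential and universal quantification. -/
inductive TeamFormula (L : Language) : Type _ where
  | fo (φ : L.Formula ℕ)
  | indep (t1 t2 t3 : List (L.Term ℕ))
  | and (φ ψ : TeamFormula L)
  | or (φ ψ : TeamFormula L)
  | ex (x : ℕ) (φ : TeamFormula L)
  | all (x : ℕ) (φ : TeamFormula L)

namespace TeamFormula

variable {L : Language}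

/-- The set of free variables of an independence-logic formula. -/
def Fr : TeamFormula L → Set ℕ
  | .fo φ => ↑φ.freeVarFinset
  | .indep t1 t2 t3 => ↑((t1 ++ t2 ++ t3).foldr (fun t s => t.varFinset ∪ s) ∅)
  | .and φ ψ => φ.Fr ∪ ψ.Fr
  | .or φ ψ => φ.Fr ∪ ψ.Fr
  | .ex x φ => φ.Fr \ {x}
  | .all x φ => φ.Fr \ {x}

/-- A team is a set of assignments. -/
abbrev Team (M : Type*) := Set (ℕ → M)

/-- The value of a tuple (list) of terms under an assignment. -/
def listVal {M : Type*} [L.Structure M] (ts : List (L.Term ℕ)) (s : ℕ → M) : List M :=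
  ts.map fun t => t.realize s

/-- Lax team semantics for independence logic.  First-order formulas are evaluated
pointwise; disjunction splits the team into a union; `∃x φ` is witnessed by a function
`F` from the team to nonempty sets of elements, extending the team to
`X(F/x) = {s(a/x) : s ∈ X, a ∈ F s}`; `∀x φ` duplicates the team to `X(M/x)`. -/
def Sat (M : Type*) [L.Structure M] : TeamFormula L → Team M → Prop
  | .fo φ, X => ∀ s ∈ X, φ.Realize s
  | .indep t1 t2 t3, X => ∀ s ∈ X, ∀ s' ∈ X, listVal t3 s = listVal t3 s' →
      ∃ s'' ∈ X, listVal t1 s'' = listVal t1 s ∧ listVal t3 s'' = listVal t3 s ∧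
        listVal t2 s'' = listVal t2 s'
  | .and φ ψ, X => φ.Sat M X ∧ ψ.Sat M X
  | .or φ ψ, X => ∃ Y Z : Team M, Y ∪ Z = X ∧ φ.Sat M Y ∧ ψ.Sat M Z
  | .ex x φ, X => ∃ F : (ℕ → M) → Set M, (∀ s ∈ X, (F s).Nonempty) ∧
      φ.Sat M {s' | ∃ s ∈ X, ∃ a ∈ F s, s' = Function.update s x a}
  | .all x φ, X => φ.Sat M {s' | ∃ s ∈ X, ∃ a : M, s' = Function.update s x a}

end TeamFormula

open FirstOrder Language

/-- Iterated existential quantification over a tuple of variables. -/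
def exList {L : Language} (xs : List ℕ) (φ : TeamFormula L) : TeamFormula L :=
  xs.foldr TeamFormula.ex φ

/-- Conjunction of a list of formulas with a base formula. -/
def andList {L : Language} (l : List (TeamFormula L)) (base : TeamFormula L) :
    TeamFormula L :=
  l.foldr TeamFormula.and base

/-- The independence atom `u ⊥_{w ++ extra} v` where `(u, w, v)` is a triple of tuples
of variables. -/
def mkIndep {L : Language} (extra : List ℕ) (a : List ℕ × List ℕ × List ℕ) :
    TeamFormula L :=
  TeamFormula.indep (a.1.map Term.var) (a.2.2.map Term.var) ((a.2.1 ++ extra).map Term.var)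

/-- The dependence atom `dep(z)`, i.e. `z` is constant on the team, expressed (as in the
paper) as the conditional independence atom `z ⊥_∅ z`. -/
def depAtom {L : Language} (z : ℕ) : TeamFormula L :=
  TeamFormula.indep [Term.var z] [Term.var z] []

/-!
For `→`, take witness teams for the two disjuncts and overwrite, on each, the variables of the
other disjunct and `z0, z1, r` by constants, with `z0 = c₀ ≠ c₁ = z1` everywhere and `r = z0` on
the first half, `r = z1` on the second (this is where two elements are needed). The atoms and the
first-order part of a disjunct do not see the overwritten variables; an atom of the other
disjunct holds trivially since its variables are constant; and since `r` is constant on each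
half with different values, conditioning on `r` makes an atom hold on the union iff it holds on
both halves. For `←`, the disjunction in the body splits a witness team into an `r = z0` and an
`r = z1` part, which `r` separates in the same way, and the assignments of `X` lying below each
part witness the corresponding disjunct.
-/

namespace TeamFormula

variable {L : Language} {M : Type*} [L.Structure M]

def AgreeOff (V : Set ℕ) (X Y : Team M) : Prop :=
  (∀ s ∈ X, ∃ t ∈ Y, Set.EqOn s t Vᶜ) ∧ ∀ t ∈ Y, ∃ s ∈ X, Set.EqOn s t Vᶜ

namespace AgreeOff

variable {V A : Set ℕ} {X Y Z W W₀ W₁ : Team M}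

theorem refl (V : Set ℕ) (X : Team M) : AgreeOff V X X :=
  ⟨fun s hs => ⟨s, hs, Set.eqOn_refl _ _⟩, fun s hs => ⟨s, hs, Set.eqOn_refl _ _⟩⟩

theorem symm (h : AgreeOff V X Y) : AgreeOff V Y X :=
  ⟨fun t ht => let ⟨s, hs, e⟩ := h.2 t ht; ⟨s, hs, e.symm⟩,
    fun s hs => let ⟨t, ht, e⟩ := h.1 s hs; ⟨t, ht, e.symm⟩⟩

theorem trans (hXY : AgreeOff V X Y) (hYZ : AgreeOff V Y Z) : AgreeOff V X Z := by
  refine ⟨fun s hs => ?_, fun u hu => ?_⟩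
  · obtain ⟨t, ht, e⟩ := hXY.1 s hs
    obtain ⟨u, hu, e'⟩ := hYZ.1 t ht
    exact ⟨u, hu, e.trans e'⟩
  · obtain ⟨t, ht, e'⟩ := hYZ.2 u hu
    obtain ⟨s, hs, e⟩ := hXY.2 t ht
    exact ⟨s, hs, e.trans e'⟩

theorem mono (h : AgreeOff V X Y) (hVA : V ⊆ A) : AgreeOff A X Y :=
  ⟨fun s hs => let ⟨t, ht, e⟩ := h.1 s hs; ⟨t, ht, e.mono (Set.compl_subset_compl.2 hVA)⟩,
    fun t ht => let ⟨s, hs, e⟩ := h.2 t ht; ⟨s, hs, e.mono (Set.compl_subset_compl.2 hVA)⟩⟩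

theorem union (h₀ : AgreeOff V X W₀) (h₁ : AgreeOff V Y W₁) :
    AgreeOff V (X ∪ Y) (W₀ ∪ W₁) := by
  refine ⟨?_, ?_⟩
  · rintro s (hs | hs)
    · obtain ⟨t, ht, e⟩ := h₀.1 s hs; exact ⟨t, .inl ht, e⟩
    · obtain ⟨t, ht, e⟩ := h₁.1 s hs; exact ⟨t, .inr ht, e⟩
  · rintro t (ht | ht)
    · obtain ⟨s, hs, e⟩ := h₀.2 t ht; exact ⟨s, .inl hs, e⟩
    · obtain ⟨s, hs, e⟩ := h₁.2 t ht; exact ⟨s, .inr hs, e⟩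

theorem eq_of_empty (h : AgreeOff ∅ X Y) : X = Y := by
  have hst : ∀ s t : ℕ → M, Set.EqOn s t (∅ : Set ℕ)ᶜ → s = t := fun s t e =>
    funext fun v => e (Set.notMem_empty v)
  ext s
  constructor
  · intro hs
    obtain ⟨t, ht, e⟩ := h.1 s hs
    rwa [hst s t e]
  · intro hs
    obtain ⟨t, ht, e⟩ := h.2 s hs
    rwa [← hst t s e]

theorem sep_of_subset (h : AgreeOff V X W) (hW₀ : W₀ ⊆ W) :
    AgreeOff V {s ∈ X | ∃ t ∈ W₀, Set.EqOn s t Vᶜ} W₀ := by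
  refine ⟨fun s hs => hs.2, fun t ht => ?_⟩
  obtain ⟨s, hs, e⟩ := h.2 t (hW₀ ht)
  exact ⟨s, ⟨hs, t, ht, e⟩, e⟩

theorem sep_union_sep (h : AgreeOff V X (W₀ ∪ W₁)) :
    {s ∈ X | ∃ t ∈ W₀, Set.EqOn s t Vᶜ} ∪ {s ∈ X | ∃ t ∈ W₁, Set.EqOn s t Vᶜ} = X := by
  refine Set.union_subset (Set.sep_subset _ _) (Set.sep_subset _ _) |>.antisymm fun s hs => ?_
  obtain ⟨t, ht | ht, e⟩ := h.1 s hs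
  exacts [.inl ⟨hs, t, ht, e⟩, .inr ⟨hs, t, ht, e⟩]

/-- The witness takes its values on `A` from `W` and off `A` from `X`. -/
theorem exists_glue (h : AgreeOff V X W) (A : Set ℕ) :
    ∃ Y, AgreeOff A X Y ∧ AgreeOff (V \ A) Y W := by
  classical
  refine ⟨{p | ∃ s ∈ X, ∃ t ∈ W, Set.EqOn s t Vᶜ ∧ p = A.piecewise t s}, ⟨?_, ?_⟩, ?_, ?_⟩
  · intro s hs
    obtain ⟨t, ht, e⟩ := h.1 s hs
    exact ⟨_, ⟨s, hs, t, ht, e, rfl⟩, fun v hv => (Set.piecewise_eq_of_notMem _ _ _ hv).symm⟩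
  · rintro _ ⟨s, hs, t, -, -, rfl⟩
    exact ⟨s, hs, fun v hv => (Set.piecewise_eq_of_notMem _ _ _ hv).symm⟩
  · rintro _ ⟨s, -, t, ht, e, rfl⟩
    refine ⟨t, ht, fun v hv => ?_⟩
    by_cases hvA : v ∈ A
    · exact Set.piecewise_eq_of_mem _ _ _ hvA
    · rw [Set.piecewise_eq_of_notMem _ _ _ hvA]
      exact e fun hvV => hv ⟨hvV, hvA⟩
  · intro t ht
    obtain ⟨s, hs, e⟩ := h.2 t ht
    refine ⟨_, ⟨s, hs, t, ht, e, rfl⟩, fun v hv => ?_⟩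
    by_cases hvA : v ∈ A
    · exact Set.piecewise_eq_of_mem _ _ _ hvA
    · rw [Set.piecewise_eq_of_notMem _ _ _ hvA]
      exact e fun hvV => hv ⟨hvV, hvA⟩

end AgreeOff

def supplement (X : Team M) (x : ℕ) (F : (ℕ → M) → Set M) : Team M :=
  {s' | ∃ s ∈ X, ∃ a ∈ F s, s' = Function.update s x a}

theorem sat_ex {x : ℕ} {φ : TeamFormula L} {X : Team M} :
    (ex x φ).Sat M X ↔ ∃ F, (∀ s ∈ X, (F s).Nonempty) ∧ φ.Sat M (supplement X x F) :=
  Iff.rfl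

theorem agreeOff_supplement {X : Team M} {x : ℕ} {F : (ℕ → M) → Set M}
    (hF : ∀ s ∈ X, (F s).Nonempty) : AgreeOff {x} X (supplement X x F) := by
  refine ⟨fun s hs => ?_, ?_⟩
  · obtain ⟨a, ha⟩ := hF s hs
    exact ⟨_, ⟨s, hs, a, ha, rfl⟩, fun v hv => (Function.update_of_ne hv _ _).symm⟩
  · rintro _ ⟨s, hs, a, -, rfl⟩
    exact ⟨s, hs, fun v hv => (Function.update_of_ne hv _ _).symm⟩

theorem agreeOff_insert_iff {x : ℕ} {V : Set ℕ} {X Y : Team M} :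
    AgreeOff (insert x V) X Y ↔
      ∃ F, (∀ s ∈ X, (F s).Nonempty) ∧ AgreeOff V (supplement X x F) Y := by
  constructor
  · intro h
    have hupdate : ∀ s t : ℕ → M, Set.EqOn s t (insert x V)ᶜ →
        Set.EqOn (Function.update s x (t x)) t Vᶜ := by
      intro s t e v hv
      rcases eq_or_ne v x with rfl | hvx
      · exact Function.update_self ..
      · rw [Function.update_of_ne hvx]
        exact e (by simp only [Set.mem_compl_iff, Set.mem_insert_iff, not_or]; exact ⟨hvx, hv⟩)
    refine ⟨fun s => (· x) '' {t ∈ Y | Set.EqOn s t (insert x V)ᶜ}, fun s hs => ?_, ?_, ?_⟩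
    · obtain ⟨t, ht, e⟩ := h.1 s hs
      exact ⟨t x, t, ⟨ht, e⟩, rfl⟩
    · rintro _ ⟨s, -, _, ⟨t, ⟨ht, e⟩, rfl⟩, rfl⟩
      exact ⟨t, ht, hupdate s t e⟩
    · intro t ht
      obtain ⟨s, hs, e⟩ := h.2 t ht
      exact ⟨_, ⟨s, hs, t x, ⟨t, ⟨ht, e⟩, rfl⟩, rfl⟩, hupdate s t e⟩
  · rintro ⟨F, hF, h⟩
    exact ((agreeOff_supplement hF).mono (Set.singleton_subset_iff.2 (Set.mem_insert x V))).trans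
      (h.mono (Set.subset_insert x V))

theorem sat_exList {xs : List ℕ} {φ : TeamFormula L} {X : Team M} :
    (exList xs φ).Sat M X ↔ ∃ Y, AgreeOff {v | v ∈ xs} X Y ∧ φ.Sat M Y := by
  induction xs generalizing X with
  | nil =>
    simp only [exList, List.foldr_nil, List.not_mem_nil, Set.ofPred_false]
    exact ⟨fun h => ⟨X, .refl _ _, h⟩, fun ⟨Y, hXY, h⟩ => hXY.eq_of_empty ▸ h⟩
  | cons x xs ih =>
    have hset : {v | v ∈ x :: xs} = insert x {v | v ∈ xs} := by ext; simp
    show (ex x (exList xs φ)).Sat M X ↔ _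
    simp only [sat_ex, ih, hset, agreeOff_insert_iff]
    constructor
    · rintro ⟨F, hF, Y, hY, hφ⟩
      exact ⟨Y, ⟨F, hF, hY⟩, hφ⟩
    · rintro ⟨Y, ⟨F, hF, hY⟩, hφ⟩
      exact ⟨F, hF, Y, hY, hφ⟩

theorem sat_andList {l : List (TeamFormula L)} {base : TeamFormula L} {X : Team M} :
    (andList l base).Sat M X ↔ (∀ ψ ∈ l, ψ.Sat M X) ∧ base.Sat M X := by
  induction l with
  | nil => simp [andList]
  | cons ψ l ih =>
    show ψ.Sat M X ∧ (andList l base).Sat M X ↔ _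
    rw [ih, List.forall_mem_cons, and_assoc]

theorem sat_depAtom {z : ℕ} {X : Team M} :
    (depAtom (L := L) z).Sat M X ↔ ∀ s ∈ X, ∀ t ∈ X, s z = t z := by
  simp only [depAtom, Sat, listVal, List.map_cons, List.map_nil, Term.realize_var,
    List.cons.injEq, and_true, true_and, forall_const]
  refine forall₂_congr fun s hs => forall₂_congr fun t ht => ⟨?_, fun e => ⟨s, hs, rfl, e⟩⟩
  rintro ⟨p, -, hps, hpt⟩
  exact hps.symm.trans hpt

theorem realize_congr_of_eqOn {φ : L.Formula ℕ} {v v' : ℕ → M}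
    (h : Set.EqOn v v' φ.freeVarFinset) : φ.Realize v ↔ φ.Realize v' := by
  classical
  have hsub : (φ.freeVarFinset : Set ℕ) ⊆ φ.freeVarFinset := subset_rfl
  have hrestrict : v ∘ (Subtype.val : ↥(φ.freeVarFinset : Set ℕ) → ℕ) = v' ∘ Subtype.val :=
    funext fun x => h x.2
  unfold Formula.Realize
  rw [← BoundedFormula.realize_restrictFreeVar' hsub (v := v),
    ← BoundedFormula.realize_restrictFreeVar' hsub (v := v'), hrestrict]

theorem listVal_map_var (vs : List ℕ) (s : ℕ → M) :
    listVal (L := L) (vs.map Term.var) s = vs.map s := by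
  simp [listVal]

theorem sat_mkIndep_iff {e u w v : List ℕ} {X : Team M} :
    (mkIndep (L := L) e (u, w, v)).Sat M X ↔ ∀ s ∈ X, ∀ t ∈ X,
      (w ++ e).map s = (w ++ e).map t →
      ∃ p ∈ X, u.map p = u.map s ∧ (w ++ e).map p = (w ++ e).map s ∧ v.map p = v.map t := by
  simp only [mkIndep, Sat, listVal_map_var]

theorem sat_mkIndep_of_eq {e : List ℕ} {a : List ℕ × List ℕ × List ℕ} {X : Team M}
    (g : ℕ → M) (h : ∀ s ∈ X, ∀ x ∈ a.2.2, s x = g x) : (mkIndep (L := L) e a).Sat M X := by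
  obtain ⟨u, w, v⟩ := a
  exact sat_mkIndep_iff.2 fun s hs t ht _ =>
    ⟨s, hs, rfl, rfl, List.map_congr_left fun x hx => (h s hs x hx).trans (h t ht x hx).symm⟩

theorem sat_indep_append_iff {t₁ t₂ t₃ t : List (L.Term ℕ)} {X : Team M}
    (h : ∀ s ∈ X, ∀ s' ∈ X, listVal t s = listVal t s') :
    (indep t₁ t₂ (t₃ ++ t)).Sat M X ↔ (indep t₁ t₂ t₃).Sat M X := by
  have hcancel : ∀ s ∈ X, ∀ s' ∈ X,
      listVal (t₃ ++ t) s = listVal (t₃ ++ t) s' ↔ listVal t₃ s = listVal t₃ s' := by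
    intro s hs s' hs'
    simp only [listVal, List.map_append]
    rw [show t.map (fun x => x.realize s) = t.map (fun x => x.realize s') from h s hs s' hs',
      List.append_left_inj]
  constructor
  · intro H s hs s' hs' e
    obtain ⟨p, hp, h₁, h₃, h₂⟩ := H s hs s' hs' ((hcancel s hs s' hs').2 e)
    exact ⟨p, hp, h₁, (hcancel p hp s hs).1 h₃, h₂⟩
  · intro H s hs s' hs' e
    obtain ⟨p, hp, h₁, h₃, h₂⟩ := H s hs s' hs' ((hcancel s hs s' hs').1 e)
    exact ⟨p, hp, h₁, (hcancel p hp s hs).2 h₃, h₂⟩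

theorem sat_indep_union_iff {t₁ t₂ t₃ : List (L.Term ℕ)} {A B : Team M}
    (h : ∀ s ∈ A, ∀ s' ∈ B, listVal t₃ s ≠ listVal t₃ s') :
    (indep t₁ t₂ t₃).Sat M (A ∪ B) ↔ (indep t₁ t₂ t₃).Sat M A ∧ (indep t₁ t₂ t₃).Sat M B := by
  constructor
  · intro H
    refine ⟨fun s hs s' hs' e => ?_, fun s hs s' hs' e => ?_⟩
    · obtain ⟨p, hpA | hpB, hp⟩ := H s (.inl hs) s' (.inl hs') e
      exacts [⟨p, hpA, hp⟩, absurd hp.2.1.symm (h s hs p hpB)]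
    · obtain ⟨p, hpA | hpB, hp⟩ := H s (.inr hs) s' (.inr hs') e
      exacts [absurd hp.2.1 (h p hpA s hs), ⟨p, hpB, hp⟩]
  · rintro ⟨HA, HB⟩ s (hs | hs) s' (hs' | hs') e
    · obtain ⟨p, hp, hp'⟩ := HA s hs s' hs' e; exact ⟨p, .inl hp, hp'⟩
    · exact absurd e (h s hs s' hs')
    · exact absurd e.symm (h s' hs' s hs)
    · obtain ⟨p, hp, hp'⟩ := HB s hs s' hs' e; exact ⟨p, .inr hp, hp'⟩

theorem sat_mkIndep_union_iff {a : List ℕ × List ℕ × List ℕ} {r : ℕ} {A B : Team M}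
    (hA : ∀ s ∈ A, ∀ t ∈ A, s r = t r) (hB : ∀ s ∈ B, ∀ t ∈ B, s r = t r)
    (hAB : ∀ s ∈ A, ∀ t ∈ B, s r ≠ t r) :
    (mkIndep (L := L) [r] a).Sat M (A ∪ B) ↔
      (mkIndep (L := L) [] a).Sat M A ∧ (mkIndep (L := L) [] a).Sat M B := by
  obtain ⟨u, w, v⟩ := a
  have hr : ∀ s : ℕ → M, listVal (L := L) [Term.var r] s = [s r] := fun _ => rfl
  simp only [mkIndep, List.map_append, List.map_cons, List.map_nil, List.append_nil]
  rw [sat_indep_union_iff fun s hs t ht e => hAB s hs t ht ?_,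
    sat_indep_append_iff (fun s hs t ht => by rw [hr, hr, hA s hs t ht]),
    sat_indep_append_iff (fun s hs t ht => by rw [hr, hr, hB s hs t ht])]
  simp only [listVal, List.map_append] at e
  simpa using (List.append_inj' e (by simp)).2

variable (M) in
def Ignores (U : Set ℕ) (φ : TeamFormula L) : Prop :=
  ∀ X Y : Team M, AgreeOff U X Y → φ.Sat M X → φ.Sat M Y

theorem Ignores.mono {U U' : Set ℕ} {φ : TeamFormula L} (h : Ignores M U φ) (hU : U' ⊆ U) :
    Ignores M U' φ :=
  fun X Y hXY => h X Y (hXY.mono hU)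

theorem ignores_fo {U : Set ℕ} {φ : L.Formula ℕ} (h : ∀ x ∈ φ.freeVarFinset, x ∉ U) :
    Ignores M U (fo φ) := fun _ _ hXY hX t ht =>
  let ⟨s, hs, e⟩ := hXY.2 t ht
  (realize_congr_of_eqOn fun x hx => e (h x hx)).1 (hX s hs)

theorem ignores_mkIndep {U : Set ℕ} {a : List ℕ × List ℕ × List ℕ}
    (h : ∀ x ∈ a.1 ++ a.2.1 ++ a.2.2, x ∉ U) : Ignores M U (mkIndep (L := L) [] a) := by
  obtain ⟨u, w, v⟩ := a
  have hmap : ∀ {s t : ℕ → M}, Set.EqOn s t Uᶜ →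
      u.map s = u.map t ∧ w.map s = w.map t ∧ v.map s = v.map t := fun e =>
    ⟨List.map_congr_left fun x hx => e (h x (by simp [hx])),
      List.map_congr_left fun x hx => e (h x (by simp [hx])),
      List.map_congr_left fun x hx => e (h x (by simp [hx]))⟩
  intro X Y hXY hX
  simp only [sat_mkIndep_iff, List.append_nil] at hX ⊢
  intro s hs t ht hw
  obtain ⟨s', hs', es⟩ := hXY.2 s hs
  obtain ⟨t', ht', et⟩ := hXY.2 t ht
  obtain ⟨p, hp, hu, hw', hv⟩ := hX s' hs' t' ht' (by rw [(hmap es).2.1, (hmap et).2.1, hw])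
  obtain ⟨q, hq, eq⟩ := hXY.1 p hp
  refine ⟨q, hq, ?_, ?_, ?_⟩
  · rw [← (hmap eq).1, hu, (hmap es).1]
  · rw [← (hmap eq).2.1, hw', (hmap es).2.1]
  · rw [← (hmap eq).2.2, hv, (hmap et).2.2]

theorem ignores_andList {U : Set ℕ} {l : List (TeamFormula L)} {base : TeamFormula L}
    (hl : ∀ ψ ∈ l, Ignores M U ψ) (hbase : Ignores M U base) : Ignores M U (andList l base) :=
  fun X Y hXY hX =>
    let ⟨hlX, hbX⟩ := sat_andList.1 hX
    sat_andList.2 ⟨fun ψ hψ => hl ψ hψ X Y hXY (hlX ψ hψ), hbase X Y hXY hbX⟩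

theorem ignores_andList_mkIndep_fo {U : Set ℕ} {atoms : List (List ℕ × List ℕ × List ℕ)}
    {θ : L.Formula ℕ} (hatoms : ∀ a ∈ atoms, ∀ x ∈ a.1 ++ a.2.1 ++ a.2.2, x ∉ U)
    (hθ : ∀ x ∈ θ.freeVarFinset, x ∉ U) :
    Ignores M U (andList (atoms.map (mkIndep [])) (fo θ)) :=
  ignores_andList (List.forall_mem_map.2 fun a ha => ignores_mkIndep (hatoms a ha))
    (ignores_fo hθ)

theorem exists_agreeOff_of_sat_exList {xs : List ℕ} {U : Set ℕ} {φ : TeamFormula L}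
    {Y : Team M} (hφ : Ignores M U φ) (g : ℕ → M) (h : (exList xs φ).Sat M Y) :
    ∃ W, AgreeOff ({v | v ∈ xs} ∪ U) Y W ∧ φ.Sat M W ∧ ∀ s ∈ W, ∀ v ∈ U, s v = g v := by
  classical
  obtain ⟨Y', hYY', hY'⟩ := sat_exList.1 h
  have hY'W : AgreeOff U Y' ((U.piecewise g ·) '' Y') :=
    ⟨fun s hs => ⟨_, ⟨s, hs, rfl⟩, fun v hv => (Set.piecewise_eq_of_notMem _ _ _ hv).symm⟩,
      by
        rintro _ ⟨s, hs, rfl⟩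
        exact ⟨s, hs, fun v hv => (Set.piecewise_eq_of_notMem _ _ _ hv).symm⟩⟩
  refine ⟨_, (hYY'.mono Set.subset_union_left).trans (hY'W.mono Set.subset_union_right),
    hφ _ _ hY'W hY', ?_⟩
  rintro _ ⟨s, -, rfl⟩ v hv
  exact Set.piecewise_eq_of_mem _ _ _ hv

theorem sat_exList_sep_of_agreeOff {xs : List ℕ} {V : Set ℕ} {φ : TeamFormula L}
    {X W W₀ : Team M} (hXW : AgreeOff V X W) (hW₀ : W₀ ⊆ W)
    (hφ : Ignores M (V \ {v | v ∈ xs}) φ) (h : φ.Sat M W₀) :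
    (exList xs φ).Sat M {s ∈ X | ∃ t ∈ W₀, Set.EqOn s t Vᶜ} := by
  obtain ⟨Y, hXY, hYW₀⟩ := (hXW.sep_of_subset hW₀).exists_glue {v | v ∈ xs}
  exact sat_exList.2 ⟨Y, hXY, hφ _ _ hYW₀.symm h⟩

theorem setOf_mem_append_append {x0 x1 : List ℕ} {z0 z1 r : ℕ} :
    {v | v ∈ x0 ++ x1 ++ [z0, z1, r]} = {v | v ∈ x0} ∪ ({v | v ∈ x1} ∪ {z0, z1, r}) := by
  ext
  simp only [Set.mem_ofPred_eq, Set.mem_union, Set.mem_insert_iff, Set.mem_singleton_iff,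
    List.mem_append, List.mem_cons, List.not_mem_nil, or_false, or_assoc]

theorem sat_tagged_of_sat_or {θ0 θ1 : L.Formula ℕ} {x0 x1 : List ℕ} {z0 z1 r : ℕ}
    {atoms0 atoms1 : List (List ℕ × List ℕ × List ℕ)}
    (hatoms0 : ∀ a ∈ atoms0, ∀ v ∈ a.1 ++ a.2.1 ++ a.2.2, v ∈ x0)
    (hatoms1 : ∀ a ∈ atoms1, ∀ v ∈ a.1 ++ a.2.1 ++ a.2.2, v ∈ x1)
    (hφ0 : Ignores M ({v | v ∈ x1} ∪ {z0, z1, r}) (andList (atoms0.map (mkIndep [])) (.fo θ0)))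
    (hφ1 : Ignores M ({v | v ∈ x0} ∪ {z0, z1, r}) (andList (atoms1.map (mkIndep [])) (.fo θ1)))
    (hzzr : z0 ≠ z1 ∧ z0 ≠ r ∧ z1 ≠ r) (hM : ∃ a b : M, a ≠ b) {X : Team M}
    (h : ((exList x0 (andList (atoms0.map (mkIndep [])) (.fo θ0))).or
      (exList x1 (andList (atoms1.map (mkIndep [])) (.fo θ1)))).Sat M X) :
    (exList (x0 ++ x1 ++ [z0, z1, r])
      (andList ((atoms0 ++ atoms1).map (mkIndep [r]))
        ((depAtom z0).and ((depAtom z1).and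
          ((TeamFormula.fo (Term.equal (Term.var z0) (Term.var z1)).not).and
            (((TeamFormula.fo θ0).and
                (.fo (Term.equal (Term.var r) (Term.var z0)))).or
              ((TeamFormula.fo θ1).and
                (.fo (Term.equal (Term.var r) (Term.var z1)))))))))).Sat M X := by
  obtain ⟨Y, Z, rfl, hY, hZ⟩ := h
  obtain ⟨c0, c1, hc⟩ := hM
  obtain ⟨hz01, hz0r, hz1r⟩ := hzzr
  obtain ⟨W0, hYW0, hW0, hgW0⟩ :=
    exists_agreeOff_of_sat_exList hφ0 (fun v => if v = z1 then c1 else c0) hY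
  obtain ⟨W1, hZW1, hW1, hgW1⟩ :=
    exists_agreeOff_of_sat_exList hφ1 (fun v => if v = z0 then c0 else c1) hZ
  obtain ⟨hatomsW0, hθW0⟩ := sat_andList.1 hW0
  obtain ⟨hatomsW1, hθW1⟩ := sat_andList.1 hW1
  have hz0 : ∀ s ∈ W0 ∪ W1, s z0 = c0 := by
    rintro s (hs | hs)
    · simp [hgW0 s hs z0 (by simp), hz01]
    · simp [hgW1 s hs z0 (by simp)]
  have hz1 : ∀ s ∈ W0 ∪ W1, s z1 = c1 := by
    rintro s (hs | hs)
    · simp [hgW0 s hs z1 (by simp)]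
    · simp [hgW1 s hs z1 (by simp), hz01.symm]
  have hr0 : ∀ s ∈ W0, s r = c0 := fun s hs => by simp [hgW0 s hs r (by simp), hz1r.symm]
  have hr1 : ∀ s ∈ W1, s r = c1 := fun s hs => by simp [hgW1 s hs r (by simp), hz0r.symm]
  have hsplit (a : List ℕ × List ℕ × List ℕ) :=
    sat_mkIndep_union_iff (L := L) (a := a) (fun s hs t ht => by rw [hr0 s hs, hr0 t ht])
      (fun s hs t ht => by rw [hr1 s hs, hr1 t ht])
      (fun s hs t ht => by rw [hr0 s hs, hr1 t ht]; exact hc)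
  refine sat_exList.2 ⟨W0 ∪ W1, (hYW0.mono setOf_mem_append_append.ge).union (hZW1.mono ?_),
    sat_andList.2 ⟨?_, ?_⟩⟩
  · rw [setOf_mem_append_append, Set.union_left_comm]
  · simp only [List.forall_mem_map, List.forall_mem_append]
    refine ⟨fun a ha => (hsplit a).2 ⟨hatomsW0 _ (List.mem_map_of_mem ha), ?_⟩,
      fun a ha => (hsplit a).2 ⟨?_, hatomsW1 _ (List.mem_map_of_mem ha)⟩⟩
    · exact sat_mkIndep_of_eq _ fun s hs v hv => hgW1 s hs v (.inl (hatoms0 a ha v (by simp [hv])))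
    · exact sat_mkIndep_of_eq _ fun s hs v hv => hgW0 s hs v (.inl (hatoms1 a ha v (by simp [hv])))
  · refine ⟨sat_depAtom.2 fun s hs t ht => by rw [hz0 s hs, hz0 t ht],
      sat_depAtom.2 fun s hs t ht => by rw [hz1 s hs, hz1 t ht],
      fun s hs => by simp [hz0 s hs, hz1 s hs, hc], W0, W1, rfl, ⟨hθW0, fun s hs => ?_⟩,
      hθW1, fun s hs => ?_⟩
    · simp [hr0 s hs, hz0 s (.inl hs)]
    · simp [hr1 s hs, hz1 s (.inr hs)]

theorem sat_or_of_sat_tagged {θ0 θ1 : L.Formula ℕ} {x0 x1 : List ℕ} {z0 z1 r : ℕ}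
    {atoms0 atoms1 : List (List ℕ × List ℕ × List ℕ)}
    (hφ0 : Ignores M ({v | v ∈ x1} ∪ {z0, z1, r}) (andList (atoms0.map (mkIndep [])) (.fo θ0)))
    (hφ1 : Ignores M ({v | v ∈ x0} ∪ {z0, z1, r}) (andList (atoms1.map (mkIndep [])) (.fo θ1)))
    {X : Team M}
    (h : (exList (x0 ++ x1 ++ [z0, z1, r])
      (andList ((atoms0 ++ atoms1).map (mkIndep [r]))
        ((depAtom z0).and ((depAtom z1).and
          ((TeamFormula.fo (Term.equal (Term.var z0) (Term.var z1)).not).and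
            (((TeamFormula.fo θ0).and
                (.fo (Term.equal (Term.var r) (Term.var z0)))).or
              ((TeamFormula.fo θ1).and
                (.fo (Term.equal (Term.var r) (Term.var z1)))))))))).Sat M X) :
    ((exList x0 (andList (atoms0.map (mkIndep [])) (.fo θ0))).or
      (exList x1 (andList (atoms1.map (mkIndep [])) (.fo θ1)))).Sat M X := by
  obtain ⟨W, hXW, hW⟩ := sat_exList.1 h
  obtain ⟨hatoms, hdep0, hdep1, hne, W0, W1, rfl, ⟨hθ0, hr0⟩, hθ1, hr1⟩ := sat_andList.1 hW
  rw [sat_depAtom] at hdep0 hdep1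
  have hr0' : ∀ s ∈ W0, s r = s z0 := fun s hs => by simpa using hr0 s hs
  have hr1' : ∀ s ∈ W1, s r = s z1 := fun s hs => by simpa using hr1 s hs
  have hsplit (a : List ℕ × List ℕ × List ℕ) :=
    sat_mkIndep_union_iff (L := L) (a := a)
      (fun s hs t ht => by rw [hr0' s hs, hr0' t ht, hdep0 s (.inl hs) t (.inl ht)])
      (fun s hs t ht => by rw [hr1' s hs, hr1' t ht, hdep1 s (.inr hs) t (.inr ht)])
      (fun s hs t ht => by
        rw [hr0' s hs, hr1' t ht, hdep0 s (.inl hs) t (.inr ht)]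
        simpa using hne t (.inr ht))
  simp only [List.forall_mem_map, List.forall_mem_append] at hatoms
  refine ⟨_, _, hXW.sep_union_sep,
    sat_exList_sep_of_agreeOff hXW Set.subset_union_left (hφ0.mono ?_)
      (sat_andList.2 ⟨List.forall_mem_map.2 fun a ha => ((hsplit a).1 (hatoms.1 a ha)).1, hθ0⟩),
    sat_exList_sep_of_agreeOff hXW Set.subset_union_right (hφ1.mono ?_)
      (sat_andList.2 ⟨List.forall_mem_map.2 fun a ha => ((hsplit a).1 (hatoms.2 a ha)).2, hθ1⟩)⟩
  · rw [setOf_mem_append_append, Set.sdiff_subset_iff]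
  · rw [setOf_mem_append_append, Set.sdiff_subset_iff, Set.union_left_comm]

end TeamFormula

theorem TeamFormula.indep_distribution_general {L : Language} {M : Type*} [L.Structure M]
    (θ0 θ1 : L.Formula ℕ)
    (x0 x1 : List ℕ) (z0 z1 r : ℕ)
    (atoms0 atoms1 : List (List ℕ × List ℕ × List ℕ))
    (hx01 : ∀ v ∈ x0, v ∉ x1)
    (hatoms0 : ∀ a ∈ atoms0, ∀ v ∈ a.1 ++ a.2.1 ++ a.2.2, v ∈ x0)
    (hatoms1 : ∀ a ∈ atoms1, ∀ v ∈ a.1 ++ a.2.1 ++ a.2.2, v ∈ x1)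
    (hx0θ1 : ∀ v ∈ x0, v ∉ θ1.freeVarFinset)
    (hx1θ0 : ∀ v ∈ x1, v ∉ θ0.freeVarFinset)
    (hfresh : ∀ v ∈ [z0, z1, r], v ∉ x0 ∧ v ∉ x1 ∧
      v ∉ θ0.freeVarFinset ∧ v ∉ θ1.freeVarFinset)
    (hzzr : z0 ≠ z1 ∧ z0 ≠ r ∧ z1 ≠ r)
    (hM : ∃ a b : M, a ≠ b)
    (X : TeamFormula.Team M) :
    ((exList x0 (andList (atoms0.map (mkIndep [])) (.fo θ0))).or
      (exList x1 (andList (atoms1.map (mkIndep [])) (.fo θ1)))).Sat M X ↔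
    (exList (x0 ++ x1 ++ [z0, z1, r])
      (andList ((atoms0 ++ atoms1).map (mkIndep [r]))
        ((depAtom z0).and ((depAtom z1).and
          ((TeamFormula.fo (Term.equal (Term.var z0) (Term.var z1)).not).and
            (((TeamFormula.fo θ0).and
                (.fo (Term.equal (Term.var r) (Term.var z0)))).or
              ((TeamFormula.fo θ1).and
                (.fo (Term.equal (Term.var r) (Term.var z1)))))))))).Sat M X := by
  have hT (v : ℕ) (hv : v ∈ ({z0, z1, r} : Set ℕ)) := hfresh v (by simpa using hv)
  have hφ0 : Ignores M ({v | v ∈ x1} ∪ {z0, z1, r})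
      (andList (atoms0.map (mkIndep [])) (.fo θ0)) := by
    refine ignores_andList_mkIndep_fo (fun a ha v hv => ?_) fun v hv => ?_
    · rintro (hv1 | hvT)
      exacts [hx01 v (hatoms0 a ha v hv) hv1, (hT v hvT).1 (hatoms0 a ha v hv)]
    · rintro (hv1 | hvT)
      exacts [hx1θ0 v hv1 hv, (hT v hvT).2.2.1 hv]
  have hφ1 : Ignores M ({v | v ∈ x0} ∪ {z0, z1, r})
      (andList (atoms1.map (mkIndep [])) (.fo θ1)) := by
    refine ignores_andList_mkIndep_fo (fun a ha v hv => ?_) fun v hv => ?_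
    · rintro (hv0 | hvT)
      exacts [hx01 v hv0 (hatoms1 a ha v hv), (hT v hvT).2.1 (hatoms1 a ha v hv)]
    · rintro (hv0 | hvT)
      exacts [hx0θ1 v hv0 hv, (hT v hvT).2.2.2 hv]
  exact ⟨sat_tagged_of_sat_or hatoms0 hatoms1 hφ0 hφ1 hzzr hM, sat_or_of_sat_tagged hφ0 hφ1⟩

/-- independence distribution over disjunction (rule 6), restricted to
structures with more than one element: for first-order `θ0, θ1` and all teams `X`,
`M ⊨_X ∃x0(⋀ᵢ uᵢ ⊥_{wᵢ} vᵢ ∧ θ0) ∨ ∃x1(⋀ᵢ uᵢ ⊥_{wᵢ} vᵢ ∧ θ1)` iff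
`M ⊨_X ∃x0 ∃x1 ∃z0 ∃z1 ∃r [⋀ᵢ uᵢ ⊥_{wᵢ r} vᵢ ∧ dep(z0) ∧ dep(z1) ∧ ¬z0=z1 ∧
((θ0 ∧ r=z0) ∨ (θ1 ∧ r=z1))]`, where the atoms of the first disjunct (listed in
`atoms0` as triples `(uᵢ, wᵢ, vᵢ)`) use only variables of the tuple `x0`, those of the
second (`atoms1`) only variables of `x1`, `x0` does not occur in the second disjunct,
`x1` does not occur in the first, and `z0, z1, r` are fresh. -/
theorem TeamFormula.indep_distribution {L : Language} {M : Type*} [L.Structure M]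
    (θ0 θ1 : L.Formula ℕ)
    (x0 x1 : List ℕ) (z0 z1 r : ℕ)
    (atoms0 atoms1 : List (List ℕ × List ℕ × List ℕ))
    (hx0 : x0.Nodup) (hx1 : x1.Nodup) (hx01 : ∀ v ∈ x0, v ∉ x1)
    (hatoms0 : ∀ a ∈ atoms0, ∀ v ∈ a.1 ++ a.2.1 ++ a.2.2, v ∈ x0)
    (hatoms1 : ∀ a ∈ atoms1, ∀ v ∈ a.1 ++ a.2.1 ++ a.2.2, v ∈ x1)
    (hx0θ1 : ∀ v ∈ x0, v ∉ θ1.freeVarFinset)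
    (hx1θ0 : ∀ v ∈ x1, v ∉ θ0.freeVarFinset)
    (hfresh : ∀ v ∈ [z0, z1, r], v ∉ x0 ∧ v ∉ x1 ∧
      v ∉ θ0.freeVarFinset ∧ v ∉ θ1.freeVarFinset)
    (hzzr : z0 ≠ z1 ∧ z0 ≠ r ∧ z1 ≠ r)
    (hM : ∃ a b : M, a ≠ b)
    (X : TeamFormula.Team M) :
    ((exList x0 (andList (atoms0.map (mkIndep [])) (.fo θ0))).or
      (exList x1 (andList (atoms1.map (mkIndep [])) (.fo θ1)))).Sat M X ↔
    (exList (x0 ++ x1 ++ [z0, z1, r])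
      (andList ((atoms0 ++ atoms1).map (mkIndep [r]))
        ((depAtom z0).and ((depAtom z1).and
          ((TeamFormula.fo (Term.equal (Term.var z0) (Term.var z1)).not).and
            (((TeamFormula.fo θ0).and
                (.fo (Term.equal (Term.var r) (Term.var z0)))).or
              ((TeamFormula.fo θ1).and
                (.fo (Term.equal (Term.var r) (Term.var z1)))))))))).Sat M X :=
  TeamFormula.indep_distribution_general θ0 θ1 x0 x1 z0 z1 r atoms0 atoms1 hx01 hatoms0 hatoms1
    hx0θ1 hx1θ0 hfresh hzzr hM X
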